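/- Let F be a field with more than k elements, let n ≥ k ≥ 2 with n + k odd, and let Y be an n×k matrix over F such that det_{n,k}(A + λY) = det_{n,k}(A) for all n×k matrices A over F and all λ ∈ F. Then the (1,1) entry of Y equals the (2,1) entry of Y, i.e. y_{1,1} − y_{2,1} = 0. -/

import Mathlib

open Classical in
noncomputable def cullisDet {F : Type*} [Field F] {n k : ℕ}
    (X : Matrix (Fin n) (Fin k) F) : F :=
  ∑ f : Fin k → Fin n, if StrictMono f then
    (-1 : F) ^ (∑ j : Fin k, ((f j : ℕ) - (j : ℕ))) * (X.submatrix f id).det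
  else 0

namespace CullisAux

open Polynomial Matrix

variable {F : Type*} [Field F] {n k : ℕ}

open Classical in
noncomputable def paux (A Y : Matrix (Fin n) (Fin k) F) : F[X] :=
  ∑ f : Fin k → Fin n, if StrictMono f then
    (-1 : F[X]) ^ (∑ j : Fin k, ((f j : ℕ) - (j : ℕ))) *
      (Matrix.det fun i j => C (A (f i) j) + X * C (Y (f i) j))
  else 0

lemma paux_eval (A Y : Matrix (Fin n) (Fin k) F) (l : F) :
    (paux A Y).eval l = cullisDet (A + l • Y) := by
  unfold paux cullisDet
  rw [eval_finset_sum]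
  refine Finset.sum_congr rfl fun f _ => ?_
  split_ifs with hf
  · rw [eval_mul, eval_pow, eval_neg, eval_one]
    congr 1
    rw [← coe_evalRingHom]
    refine (RingHom.map_det (evalRingHom l) _).trans ?_
    congr 1
    ext i j
    change evalRingHom l (C (A (f i) j) + X * C (Y (f i) j)) = _
    simp [RingHom.mapMatrix_apply, coe_evalRingHom, Matrix.map_apply, Matrix.submatrix_apply, Matrix.add_apply, smul_eq_mul]
    ring
  · simp

lemma natDegree_det_le (M : Matrix (Fin k) (Fin k) F[X]) (h : ∀ i j, (M i j).natDegree ≤ 1) :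
    M.det.natDegree ≤ k := by
  rw [Matrix.det_apply]
  apply natDegree_sum_le_of_forall_le
  intro σ _
  rw [Units.smul_def, zsmul_eq_mul]
  refine natDegree_mul_le.trans ?_
  rw [natDegree_intCast, zero_add]
  refine (natDegree_prod_le _ _).trans ?_
  calc (∑ i, (M (σ i) i).natDegree) ≤ ∑ _i : Fin k, 1 := Finset.sum_le_sum fun i _ => h _ _
    _ = k := by simp

lemma paux_natDegree_le (A Y : Matrix (Fin n) (Fin k) F) : (paux A Y).natDegree ≤ k := by
  unfold paux
  apply natDegree_sum_le_of_forall_le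
  intro f _
  split_ifs
  · refine natDegree_mul_le.trans ?_
    have h1 : ((-1 : F[X]) ^ (∑ j : Fin k, ((f j : ℕ) - (j : ℕ)))).natDegree = 0 := by
      simp [natDegree_pow]
    rw [h1, zero_add]
    apply natDegree_det_le
    intro i j
    refine (natDegree_add_le _ _).trans ?_
    simp only [natDegree_C, max_le_iff]
    refine ⟨Nat.zero_le _, natDegree_mul_le.trans ?_⟩
    simp [natDegree_X]
  · simp

lemma paux_coeff_one_eq_zero (Y : Matrix (Fin n) (Fin k) F)
    (hF : (k : Cardinal) < Cardinal.mk F)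
    (hY : ∀ (A : Matrix (Fin n) (Fin k) F) (l : F),
      cullisDet (A + l • Y) = cullisDet A) (A : Matrix (Fin n) (Fin k) F) :
    (paux A Y).coeff 1 = 0 := by
  have h0 : ∀ l : F, (paux A Y - C (cullisDet A)).eval l = 0 := fun l => by
    rw [eval_sub, paux_eval, eval_C, hY, sub_self]
  have hdeg : (paux A Y - C (cullisDet A)).natDegree ≤ k :=
    (natDegree_sub_le _ _).trans (by simp [paux_natDegree_le, natDegree_C])
  have hz : paux A Y - C (cullisDet A) = 0 := by
    refine Polynomial.eq_zero_of_forall_eval_zero_of_natDegree_lt_card _ h0 ?_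
    exact lt_of_le_of_lt (Nat.cast_le.mpr hdeg) hF
  have : paux A Y = C (cullisDet A) := by
    have := sub_eq_zero.mp hz; exact this
  rw [this, coeff_C]
  simp

/-- If two rows of a polynomial matrix are divisible by `X`, the coefficient of `X` in the
determinant vanishes. -/
lemma coeff_one_det_eq_zero {M : Matrix (Fin k) (Fin k) F[X]} {i1 i2 : Fin k}
    (h12 : i1 ≠ i2) (h1 : ∀ j, (M i1 j).coeff 0 = 0) (h2 : ∀ j, (M i2 j).coeff 0 = 0) :
    M.det.coeff 1 = 0 := by
  have hdvd : (X : F[X]) ^ 2 ∣ M.det := by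
    rw [Matrix.det_apply]
    refine Finset.dvd_sum fun σ _ => ?_
    have ha : (X : F[X]) ∣ M (σ (σ⁻¹ i1)) (σ⁻¹ i1) := by
      rw [Equiv.Perm.inv_def, Equiv.apply_symm_apply]; exact X_dvd_iff.mpr (h1 _)
    have hb : (X : F[X]) ∣ M (σ (σ⁻¹ i2)) (σ⁻¹ i2) := by
      rw [Equiv.Perm.inv_def, Equiv.apply_symm_apply]; exact X_dvd_iff.mpr (h2 _)
    have hane : σ⁻¹ i1 ≠ σ⁻¹ i2 := fun h => h12 (σ⁻¹.injective h)
    have hprod : (X : F[X]) ^ 2 ∣ ∏ i, M (σ i) i := by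
      have hsub := Finset.prod_dvd_prod_of_subset ({σ⁻¹ i1, σ⁻¹ i2} : Finset (Fin k))
        Finset.univ (fun i => M (σ i) i) (Finset.subset_univ _)
      rw [Finset.prod_pair hane] at hsub
      exact dvd_trans (by rw [pow_two]; exact mul_dvd_mul ha hb) hsub
    rw [Units.smul_def, zsmul_eq_mul]
    exact Dvd.dvd.mul_left hprod _
  obtain ⟨q, hq⟩ := hdvd
  rw [hq, pow_two, mul_assoc]
  rw [show (1 : ℕ) = 0 + 1 from rfl, coeff_X_mul, mul_coeff_zero, coeff_X_zero, zero_mul]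

/-- If one row of a polynomial matrix is `X` times a constant row, the coefficient of `X` in the
determinant is a determinant over `F`. -/
lemma coeff_one_det_single {M : Matrix (Fin k) (Fin k) F[X]} {i0 : Fin k} {w : Fin k → F}
    (h : ∀ j, M i0 j = X * C (w j)) :
    M.det.coeff 1 = (Matrix.det fun i j => if i = i0 then w j else (M i j).eval 0) := by
  have hM : M = M.updateRow i0 ((X : F[X]) • fun j => C (w j)) := by
    ext i j
    rcases eq_or_ne i i0 with rfl | hne
    · simp [Matrix.updateRow_apply, h j, smul_eq_mul]
    · simp [Matrix.updateRow_apply, hne]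
  conv_lhs => rw [hM]
  rw [Matrix.det_updateRow_smul]
  rw [show (1 : ℕ) = 0 + 1 from rfl, coeff_X_mul]
  rw [coeff_zero_eq_eval_zero, ← coe_evalRingHom, RingHom.map_det]
  congr 1
  ext i j
  rcases eq_or_ne i i0 with rfl | hne
  · simp [Matrix.map_apply, Matrix.updateRow_apply]
  · simp [Matrix.map_apply, Matrix.updateRow_apply, hne, coe_evalRingHom]

/-- Determinant of a permutation matrix with one row replaced. -/
lemma det_perm_updateRow (σ : Equiv.Perm (Fin k)) (i0 : Fin k) (v : Fin k → F) :
    Matrix.det ((σ.permMatrix F).updateRow i0 v)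
      = v (σ i0) * ((Equiv.Perm.sign σ : ℤ) : F) := by
  have hv : v = ∑ t : Fin k, v (σ t) • (σ.permMatrix F) t := by
    funext j
    rw [Finset.sum_apply]
    have : ∀ t : Fin k, (v (σ t) • (σ.permMatrix F) t) j
        = (fun s => v s * if s = j then 1 else 0) (σ t) := by
      intro t
      simp [Equiv.Perm.permMatrix, PEquiv.toMatrix_apply, Equiv.toPEquiv_apply, eq_comm, Pi.single_apply]
    rw [Finset.sum_congr rfl fun t _ => this t]
    rw [Fintype.sum_equiv σ _ (fun s => v s * if s = j then 1 else 0) (fun t => rfl)]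
    simp
  conv_lhs => rw [hv]
  rw [Matrix.det_updateRow_sum, Matrix.det_permutation]
  rw [smul_eq_mul]

lemma strictMono_gap {m : ℕ} {f : Fin m → Fin n} (hf : StrictMono f) :
    ∀ (d : ℕ) (a b : Fin m), (a : ℕ) + d = (b : ℕ) → (f a : ℕ) + d ≤ (f b : ℕ) := by
  intro d
  induction d with
  | zero =>
    intro a b h
    have : a = b := Fin.ext (by omega)
    subst this; simp
  | succ d ih =>
    intro a b h
    have hb' : (a : ℕ) + d < m := by have := b.isLt; omega
    have h1 := ih a ⟨(a : ℕ) + d, hb'⟩ rfl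
    have h2 : f ⟨(a : ℕ) + d, hb'⟩ < f b := hf (by rw [Fin.lt_def]; simp; omega)
    rw [Fin.lt_def] at h2
    omega


section Blocks

/-- The strictly monotone map `j ↦ j`. -/
def g0 (hkn : k ≤ n) : Fin k → Fin n := fun j => ⟨(j : ℕ), lt_of_lt_of_le j.isLt hkn⟩

/-- The strictly monotone map `(1, 2, …, k-1, i0)`. -/
def gB (hkn : k ≤ n) (i0 : Fin n) : Fin k → Fin n := fun j =>
  if h : (j : ℕ) + 1 < k then ⟨(j : ℕ) + 1, lt_of_lt_of_le h hkn⟩ else i0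

/-- The strictly monotone map `(0, 2, 3, …, k-1, i0)`. -/
def gB' (hk : 2 ≤ k) (hkn : k ≤ n) (i0 : Fin n) : Fin k → Fin n := fun j =>
  if (j : ℕ) = 0 then ⟨0, by have := hk; omega⟩
  else if h : (j : ℕ) + 1 < k then ⟨(j : ℕ) + 1, lt_of_lt_of_le h hkn⟩ else i0

variable (F) in
/-- Block matrix with rows `e₁, …, e_{k-1}` at positions `1, …, k-1`. -/
def MB : Matrix (Fin n) (Fin k) F := fun i j =>
  if (i : ℕ) = (j : ℕ) ∧ 1 ≤ (j : ℕ) then 1 else 0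

variable (F) in
/-- Block matrix with rows `e₁, …, e_{k-1}` at positions `0, 2, 3, …, k-1`. -/
def MB' : Matrix (Fin n) (Fin k) F := fun i j =>
  if ((i : ℕ) = 0 ∧ (j : ℕ) = 1) ∨ ((i : ℕ) = (j : ℕ) ∧ 2 ≤ (j : ℕ)) then 1 else 0

lemma classB (hk : 2 ≤ k) (hkn : k ≤ n) {f : Fin k → Fin n} (hf : StrictMono f) :
    (∃ j1 j2 : Fin k, j1 ≠ j2 ∧ ((f j1 : ℕ) = 0 ∨ k ≤ (f j1 : ℕ))
      ∧ ((f j2 : ℕ) = 0 ∨ k ≤ (f j2 : ℕ)))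
    ∨ f = g0 hkn
    ∨ ∃ i0 : Fin n, k ≤ (i0 : ℕ) ∧ f = gB hkn i0 := by
  have key : ∀ (a b : ℕ) (ha : a < k) (hb : b < k), a ≤ b →
      (f ⟨a, ha⟩ : ℕ) + (b - a) ≤ (f ⟨b, hb⟩ : ℕ) := by
    intro a b ha hb hab
    exact strictMono_gap hf (b - a) ⟨a, ha⟩ ⟨b, hb⟩ (show a + (b - a) = b by omega)
  by_cases htwo : ∃ j1 j2 : Fin k, j1 ≠ j2 ∧ ((f j1 : ℕ) = 0 ∨ k ≤ (f j1 : ℕ))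
      ∧ ((f j2 : ℕ) = 0 ∨ k ≤ (f j2 : ℕ))
  · exact Or.inl htwo
  right
  push_neg at htwo
  have h0lt : 0 < k := by omega
  have hl1 : k - 1 < k := by omega
  have hl2 : k - 2 < k := by omega
  have hgap0last := key 0 (k - 1) h0lt hl1 (by omega)
  have hne0last : (⟨0, h0lt⟩ : Fin k) ≠ ⟨k - 1, hl1⟩ :=
    Fin.ne_of_val_ne (show (0 : ℕ) ≠ k - 1 by omega)
  by_cases h0 : (f ⟨0, h0lt⟩ : ℕ) = 0 ∨ k ≤ (f ⟨0, h0lt⟩ : ℕ)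
  · -- identity case
    have hf00 : (f ⟨0, h0lt⟩ : ℕ) = 0 := by
      rcases h0 with h | h
      · exact h
      · have h2 := htwo _ _ hne0last (Or.inr h)
        omega
    have hlastle : (f ⟨k - 1, hl1⟩ : ℕ) ≤ k - 1 := by
      by_cases h : (f ⟨k - 1, hl1⟩ : ℕ) = 0 ∨ k ≤ (f ⟨k - 1, hl1⟩ : ℕ)
      · rcases h with h | h
        · omega
        · have h2 := htwo _ _ hne0last h0
          omega
      · omega
    refine Or.inl (funext fun j => ?_)
    obtain ⟨jv, hjv⟩ := j
    have hlow := key 0 jv h0lt hjv (by omega)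
    have hup := key jv (k - 1) hjv hl1 (by omega)
    exact Fin.ext (show (f ⟨jv, hjv⟩ : ℕ) = jv by omega)
  · -- gB case
    have hlastOut : k ≤ (f ⟨k - 1, hl1⟩ : ℕ) := by omega
    refine Or.inr ⟨f ⟨k - 1, hl1⟩, hlastOut, funext fun j => ?_⟩
    obtain ⟨jv, hjv⟩ := j
    by_cases hj : jv + 1 < k
    · have hnej : (⟨k - 1, hl1⟩ : Fin k) ≠ ⟨jv, hjv⟩ :=
        Fin.ne_of_val_ne (show k - 1 ≠ jv by omega)
      have hbound := htwo _ _ hnej (Or.inr hlastOut)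
      have hnejp : (⟨k - 1, hl1⟩ : Fin k) ≠ ⟨k - 2, hl2⟩ :=
        Fin.ne_of_val_ne (show k - 1 ≠ k - 2 by omega)
      have hboundp := htwo _ _ hnejp (Or.inr hlastOut)
      have hlow := key 0 jv h0lt hjv (by omega)
      have hup := key jv (k - 2) hjv hl2 (by omega)
      have hval : (f ⟨jv, hjv⟩ : ℕ) = jv + 1 := by omega
      simp only [gB]
      rw [dif_pos hj]
      exact Fin.ext hval
    · have hjv' : jv = k - 1 := by omega
      subst hjv'
      simp only [gB]
      rw [dif_neg hj]

lemma classB' (hk : 2 ≤ k) (hkn : k ≤ n) {f : Fin k → Fin n} (hf : StrictMono f) :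
    (∃ j1 j2 : Fin k, j1 ≠ j2 ∧ ((f j1 : ℕ) = 1 ∨ k ≤ (f j1 : ℕ))
      ∧ ((f j2 : ℕ) = 1 ∨ k ≤ (f j2 : ℕ)))
    ∨ f = g0 hkn
    ∨ ∃ i0 : Fin n, k ≤ (i0 : ℕ) ∧ f = gB' hk hkn i0 := by
  have key : ∀ (a b : ℕ) (ha : a < k) (hb : b < k), a ≤ b →
      (f ⟨a, ha⟩ : ℕ) + (b - a) ≤ (f ⟨b, hb⟩ : ℕ) := by
    intro a b ha hb hab
    exact strictMono_gap hf (b - a) ⟨a, ha⟩ ⟨b, hb⟩ (show a + (b - a) = b by omega)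
  by_cases htwo : ∃ j1 j2 : Fin k, j1 ≠ j2 ∧ ((f j1 : ℕ) = 1 ∨ k ≤ (f j1 : ℕ))
      ∧ ((f j2 : ℕ) = 1 ∨ k ≤ (f j2 : ℕ))
  · exact Or.inl htwo
  right
  push_neg at htwo
  have h0lt : 0 < k := by omega
  have h1lt : 1 < k := by omega
  have hl1 : k - 1 < k := by omega
  have hl2 : k - 2 < k := by omega
  have hgap01 := key 0 1 h0lt h1lt (by omega)
  have hgap0pre := key 0 (k - 2) h0lt hl2 (by omega)
  have hgap0last := key 0 (k - 1) h0lt hl1 (by omega)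
  have hgap1last := key 1 (k - 1) h1lt hl1 (by omega)
  have hgapprelast := key (k - 2) (k - 1) hl2 hl1 (by omega)
  -- first entry is 0
  have hf00 : (f ⟨0, h0lt⟩ : ℕ) = 0 := by
    by_contra h00
    rcases Nat.lt_or_ge (f ⟨0, h0lt⟩ : ℕ) 2 with hc | hc
    · -- f 0 = 1
      have hne : (⟨0, h0lt⟩ : Fin k) ≠ ⟨k - 1, hl1⟩ :=
        Fin.ne_of_val_ne (show (0 : ℕ) ≠ k - 1 by omega)
      have := htwo _ _ hne (Or.inl (by omega))
      omega
    · -- f 0 ≥ 2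
      have hne : (⟨k - 2, hl2⟩ : Fin k) ≠ ⟨k - 1, hl1⟩ :=
        Fin.ne_of_val_ne (show k - 2 ≠ k - 1 by omega)
      have := htwo _ _ hne (Or.inr (by omega))
      omega
  rcases Nat.lt_or_ge (f ⟨1, h1lt⟩ : ℕ) 2 with hv1 | hv1
  · -- f 1 = 1 : identity case
    have hf11 : (f ⟨1, h1lt⟩ : ℕ) = 1 := by omega
    have hlastle : (f ⟨k - 1, hl1⟩ : ℕ) ≤ k - 1 := by
      rcases Nat.lt_or_ge k 3 with h3 | h3
      · have e : (⟨k - 1, hl1⟩ : Fin k) = ⟨1, h1lt⟩ := Fin.ext (show k - 1 = 1 by omega)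
        rw [e]
        omega
      · have hne : (⟨1, h1lt⟩ : Fin k) ≠ ⟨k - 1, hl1⟩ :=
          Fin.ne_of_val_ne (show (1 : ℕ) ≠ k - 1 by omega)
        have := htwo _ _ hne (Or.inl hf11)
        omega
    refine Or.inl (funext fun j => ?_)
    obtain ⟨jv, hjv⟩ := j
    rcases Nat.eq_zero_or_pos jv with hz | hz
    · subst hz
      exact Fin.ext (show (f ⟨0, hjv⟩ : ℕ) = 0 from hf00)
    · have hlow := key 1 jv h1lt hjv (by omega)
      have hup := key jv (k - 1) hjv hl1 (by omega)
      exact Fin.ext (show (f ⟨jv, hjv⟩ : ℕ) = jv by omega)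
  · rcases Nat.lt_or_ge (f ⟨1, h1lt⟩ : ℕ) k with hv1k | hv1k
    · -- 2 ≤ f 1 ≤ k - 1 : gB' case, k ≥ 3 forced
      have hk3 : 3 ≤ k := by omega
      have hlastOut : k ≤ (f ⟨k - 1, hl1⟩ : ℕ) := by omega
      have hnep : (⟨k - 1, hl1⟩ : Fin k) ≠ ⟨k - 2, hl2⟩ :=
        Fin.ne_of_val_ne (show k - 1 ≠ k - 2 by omega)
      have hboundp := htwo _ _ hnep (Or.inr hlastOut)
      refine Or.inr ⟨f ⟨k - 1, hl1⟩, hlastOut, funext fun j => ?_⟩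
      obtain ⟨jv, hjv⟩ := j
      rcases Nat.eq_zero_or_pos jv with hz | hz
      · subst hz
        simp only [gB']
        rw [if_pos trivial]
        exact Fin.ext (show (f ⟨0, hjv⟩ : ℕ) = 0 from hf00)
      · by_cases hj : jv + 1 < k
        · have hnej : (⟨k - 1, hl1⟩ : Fin k) ≠ ⟨jv, hjv⟩ :=
            Fin.ne_of_val_ne (show k - 1 ≠ jv by omega)
          have hbound := htwo _ _ hnej (Or.inr hlastOut)
          have hlow := key 1 jv h1lt hjv (by omega)
          have hup := key jv (k - 2) hjv hl2 (by omega)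
          have hval : (f ⟨jv, hjv⟩ : ℕ) = jv + 1 := by omega
          simp only [gB']
          rw [if_neg (show ¬ (jv = 0) by omega), dif_pos hj]
          exact Fin.ext hval
        · have hjv' : jv = k - 1 := by omega
          subst hjv'
          simp only [gB']
          rw [if_neg (show ¬ (k - 1 = 0) by omega), dif_neg hj]
    · -- k ≤ f 1 : forces k = 2
      have hk2 : k = 2 := by
        by_contra hk2
        have hne : (⟨1, h1lt⟩ : Fin k) ≠ ⟨k - 1, hl1⟩ :=
          Fin.ne_of_val_ne (show (1 : ℕ) ≠ k - 1 by omega)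
        have := htwo _ _ hne (Or.inr hv1k)
        omega
      have e : (⟨k - 1, hl1⟩ : Fin k) = ⟨1, h1lt⟩ := Fin.ext (show k - 1 = 1 by omega)
      refine Or.inr ⟨f ⟨k - 1, hl1⟩, by rw [e]; exact hv1k, funext fun j => ?_⟩
      obtain ⟨jv, hjv⟩ := j
      rcases Nat.eq_zero_or_pos jv with hz | hz
      · subst hz
        simp only [gB']
        rw [if_pos trivial]
        exact Fin.ext (show (f ⟨0, hjv⟩ : ℕ) = 0 from hf00)
      · have hjv' : jv = 1 := by omega
        subst hjv'
        simp only [gB']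
        rw [if_neg (show ¬ (1 = 0) by omega), dif_neg (show ¬ (1 + 1 < k) by omega)]
        have e2 : (⟨1, hjv⟩ : Fin k) = ⟨1, h1lt⟩ := rfl
        rw [e2, ← e]


open Classical in
noncomputable def Gterm (A Y : Matrix (Fin n) (Fin k) F) (f : Fin k → Fin n) : F :=
  if StrictMono f then
    (-1 : F) ^ (∑ j : Fin k, ((f j : ℕ) - (j : ℕ))) *
      ((Matrix.det fun i j => C (A (f i) j) + X * C (Y (f i) j)).coeff 1)
  else 0

lemma paux_coeff_one (A Y : Matrix (Fin n) (Fin k) F) :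
    (paux A Y).coeff 1 = ∑ f : Fin k → Fin n, Gterm A Y f := by
  unfold paux Gterm
  rw [finset_sum_coeff]
  refine Finset.sum_congr rfl fun f _ => ?_
  split_ifs with hf
  · have hC : ((-1 : F[X]) ^ (∑ j : Fin k, ((f j : ℕ) - (j : ℕ))))
        = C ((-1 : F) ^ (∑ j : Fin k, ((f j : ℕ) - (j : ℕ)))) := by
      rw [map_pow, map_neg, Polynomial.C_1]
    rw [hC, coeff_C_mul]
  · simp

lemma g0_val (hkn : k ≤ n) (i : Fin k) : ((g0 hkn i : Fin n) : ℕ) = (i : ℕ) := rfl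

lemma gB_val_lt (hkn : k ≤ n) (i0 : Fin n) {j : Fin k} (hj : (j : ℕ) + 1 < k) :
    ((gB hkn i0 j : Fin n) : ℕ) = (j : ℕ) + 1 := by
  simp only [gB]; rw [dif_pos hj]

lemma gB_last (hkn : k' + 1 ≤ n) (i0 : Fin n) : gB hkn i0 (Fin.last k') = i0 := by
  simp only [gB]
  rw [dif_neg (by simp)]

lemma gB'_val_lt (hk : 2 ≤ k) (hkn : k ≤ n) (i0 : Fin n) {j : Fin k}
    (hj0 : (j : ℕ) ≠ 0) (hj : (j : ℕ) + 1 < k) :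
    ((gB' hk hkn i0 j : Fin n) : ℕ) = (j : ℕ) + 1 := by
  simp only [gB']; rw [if_neg hj0, dif_pos hj]

lemma gB'_val_zero (hk : 2 ≤ k) (hkn : k ≤ n) (i0 : Fin n) {j : Fin k}
    (hj0 : (j : ℕ) = 0) : ((gB' hk hkn i0 j : Fin n) : ℕ) = 0 := by
  simp only [gB']; rw [if_pos hj0]

lemma gB'_last (hk : 2 ≤ k' + 1) (hkn : k' + 1 ≤ n) (i0 : Fin n) :
    gB' hk hkn i0 (Fin.last k') = i0 := by
  simp only [gB']
  rw [if_neg (by simp; omega), dif_neg (by simp)]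

lemma MB_apply (i : Fin n) (j : Fin k) :
    MB F i j = if (i : ℕ) = (j : ℕ) ∧ 1 ≤ (j : ℕ) then 1 else 0 := rfl

lemma MB'_apply (i : Fin n) (j : Fin k) :
    MB' F i j = if ((i : ℕ) = 0 ∧ (j : ℕ) = 1) ∨ ((i : ℕ) = (j : ℕ) ∧ 2 ≤ (j : ℕ))
      then 1 else 0 := rfl

lemma g0_strictMono (hkn : k ≤ n) : StrictMono (g0 (k := k) hkn) := by
  intro a b hab
  rw [Fin.lt_def] at hab ⊢
  exact hab

lemma gB_strictMono (hkn : k ≤ n) (i0 : Fin n) (hi0 : k ≤ (i0 : ℕ)) :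
    StrictMono (gB hkn i0) := by
  intro a b hab
  rw [Fin.lt_def] at hab
  simp only [gB]
  by_cases ha : (a : ℕ) + 1 < k <;> by_cases hb : (b : ℕ) + 1 < k
  · rw [dif_pos ha, dif_pos hb]
    exact (show (a : ℕ) + 1 < (b : ℕ) + 1 by omega : _)
  · rw [dif_pos ha, dif_neg hb]
    rw [Fin.lt_def]
    exact (show (a : ℕ) + 1 < (i0 : ℕ) by omega)
  · exfalso; have := b.isLt; omega
  · exfalso; have := a.isLt; have := b.isLt; omega

lemma gB'_strictMono (hk : 2 ≤ k) (hkn : k ≤ n) (i0 : Fin n) (hi0 : k ≤ (i0 : ℕ)) :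
    StrictMono (gB' hk hkn i0) := by
  intro a b hab
  rw [Fin.lt_def] at hab
  simp only [gB']
  by_cases ha0 : (a : ℕ) = 0
  · rw [if_pos ha0, if_neg (show ¬ (b : ℕ) = 0 by omega)]
    by_cases hb : (b : ℕ) + 1 < k
    · rw [dif_pos hb, Fin.lt_def]
      exact (show (0 : ℕ) < (b : ℕ) + 1 by omega)
    · rw [dif_neg hb, Fin.lt_def]
      exact (show (0 : ℕ) < (i0 : ℕ) by omega)
  · rw [if_neg ha0, if_neg (show ¬ (b : ℕ) = 0 by omega)]
    by_cases ha : (a : ℕ) + 1 < k <;> by_cases hb : (b : ℕ) + 1 < k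
    · rw [dif_pos ha, dif_pos hb, Fin.lt_def]
      exact (show (a : ℕ) + 1 < (b : ℕ) + 1 by omega)
    · rw [dif_pos ha, dif_neg hb, Fin.lt_def]
      exact (show (a : ℕ) + 1 < (i0 : ℕ) by omega)
    · exfalso; have := b.isLt; omega
    · exfalso; have := a.isLt; have := b.isLt; omega

lemma MB_row_zero (i : Fin n) (h : (i : ℕ) = 0 ∨ k ≤ (i : ℕ)) (j : Fin k) :
    MB F i j = 0 := by
  rw [MB_apply, if_neg]
  rintro ⟨h1, h2⟩
  have := j.isLt
  omega

lemma MB'_row_zero (i : Fin n) (h : (i : ℕ) = 1 ∨ k ≤ (i : ℕ)) (j : Fin k) :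
    MB' F i j = 0 := by
  rw [MB'_apply, if_neg]
  rintro (⟨h1, h2⟩ | ⟨h1, h2⟩)
  · omega
  · have := j.isLt
    omega

lemma permMatrix_apply (σ : Equiv.Perm (Fin k)) (i j : Fin k) :
    σ.permMatrix F i j = if σ i = j then 1 else 0 := by
  show σ.toPEquiv.toMatrix i j = _
  rw [PEquiv.toMatrix_apply, Equiv.toPEquiv_apply]
  simp [Option.mem_def, eq_comm]

lemma MB_g0_offrow (hkn : k ≤ n) {i : Fin k} (j : Fin k) (hne : (i : ℕ) ≠ 0) :
    MB F (g0 hkn i) j = ((1 : Equiv.Perm (Fin k)).permMatrix F) i j := by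
  rw [permMatrix_apply, MB_apply]
  simp only [Equiv.Perm.one_apply, g0_val]
  by_cases hij : (i : ℕ) = (j : ℕ)
  · exact (if_pos (show (i : ℕ) = (j : ℕ) ∧ 1 ≤ (j : ℕ) from ⟨hij, by omega⟩)).trans
      (if_pos (Fin.ext hij : i = j)).symm
  · exact (if_neg (show ¬ ((i : ℕ) = (j : ℕ) ∧ 1 ≤ (j : ℕ)) by rintro ⟨c, _⟩; exact hij c)).trans
      (if_neg (fun hc : i = j => hij (congrArg Fin.val hc))).symm

lemma MB_gB_offrow (hkn : k ≤ n) (i0 : Fin n) {i : Fin k} (j : Fin k)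
    (hi : (i : ℕ) + 1 < k) :
    MB F (gB hkn i0 i) j = if (j : ℕ) = (i : ℕ) + 1 then 1 else 0 := by
  rw [MB_apply, gB_val_lt hkn i0 hi]
  by_cases hij : (j : ℕ) = (i : ℕ) + 1
  · rw [if_pos ⟨hij.symm, by omega⟩, if_pos hij]
  · rw [if_neg (by rintro ⟨c, _⟩; exact hij c.symm), if_neg hij]

lemma perm_rot_entry {k' : ℕ} {i : Fin (k' + 1)} (j : Fin (k' + 1)) (hi : (i : ℕ) ≠ k') :
    ((finRotate (k' + 1)).permMatrix F) i j = if (j : ℕ) = (i : ℕ) + 1 then 1 else 0 := by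
  rw [permMatrix_apply]
  have hlast : i ≠ Fin.last k' := fun h => hi (by rw [h, Fin.val_last])
  have hv : ((finRotate (k' + 1) i : Fin (k' + 1)) : ℕ) = (i : ℕ) + 1 :=
    coe_finRotate_of_ne_last hlast
  by_cases hij : (j : ℕ) = (i : ℕ) + 1
  · rw [if_pos (Fin.ext (by rw [hv, hij])), if_pos hij]
  · rw [if_neg (fun hc => hij (by rw [← congrArg Fin.val hc, hv])), if_neg hij]

lemma Gterm_MB_g0 (hk : 2 ≤ k) (hkn : k ≤ n) (Y : Matrix (Fin n) (Fin k) F) :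
    Gterm (MB F) Y (g0 hkn) = Y ⟨0, by have := hk; omega⟩ ⟨0, by have := hk; omega⟩ := by
  unfold Gterm
  rw [if_pos (g0_strictMono hkn)]
  have he : (∑ j : Fin k, (((g0 hkn j) : ℕ) - (j : ℕ))) = 0 :=
    Finset.sum_eq_zero fun j _ => by rw [g0_val]; omega
  rw [he, pow_zero, one_mul]
  have h0k : 0 < k := by omega
  have hdet := coeff_one_det_single
    (M := fun i j => C (MB F (g0 hkn i) j) + X * C (Y (g0 hkn i) j))
    (i0 := ⟨0, h0k⟩) (w := fun j => Y (g0 hkn ⟨0, h0k⟩) j) (fun j => by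
      show C (MB F (g0 hkn ⟨0, h0k⟩) j) + X * C (Y (g0 hkn ⟨0, h0k⟩) j)
        = X * C (Y (g0 hkn ⟨0, h0k⟩) j)
      rw [MB_row_zero (g0 hkn ⟨0, h0k⟩) (Or.inl rfl) j, map_zero, zero_add])
  rw [hdet]
  have hmat : (fun i j => if i = (⟨0, h0k⟩ : Fin k) then Y (g0 hkn ⟨0, h0k⟩) j
        else ((fun i j => C (MB F (g0 hkn i) j) + X * C (Y (g0 hkn i) j)) i j).eval 0)
      = ((1 : Equiv.Perm (Fin k)).permMatrix F).updateRow ⟨0, h0k⟩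
          (fun j => Y (g0 hkn ⟨0, h0k⟩) j) := by
    ext i j
    rcases eq_or_ne i (⟨0, h0k⟩ : Fin k) with rfl | hne
    · rw [if_pos rfl, Matrix.updateRow_self]
    · rw [if_neg hne, Matrix.updateRow_ne hne]
      show (C (MB F (g0 hkn i) j) + X * C (Y (g0 hkn i) j)).eval 0 = _
      rw [eval_add, eval_mul, eval_C, eval_X, zero_mul, add_zero]
      exact MB_g0_offrow hkn j (fun h0 => hne (Fin.ext h0))
  rw [hmat, det_perm_updateRow]
  simp only [Equiv.Perm.one_apply, Equiv.Perm.sign_one, Units.val_one, Int.cast_one, mul_one]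
  rfl

lemma Gterm_MB_gB (hk : 2 ≤ k) (hkn : k ≤ n) (Y : Matrix (Fin n) (Fin k) F)
    (i0 : Fin n) (hi0 : k ≤ (i0 : ℕ)) :
    Gterm (MB F) Y (gB hkn i0)
      = (-1 : F) ^ ((i0 : ℕ) + (k - 1)) * Y i0 ⟨0, by have := hk; omega⟩ := by
  obtain ⟨k', rfl⟩ : ∃ k', k = k' + 1 := ⟨k - 1, by omega⟩
  unfold Gterm
  rw [if_pos (gB_strictMono hkn i0 hi0)]
  have he : (∑ j : Fin (k' + 1), (((gB hkn i0 j) : ℕ) - (j : ℕ))) = (i0 : ℕ) := by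
    have hterm : ∀ j : Fin (k' + 1), ((gB hkn i0 j : ℕ) - (j : ℕ))
        = if (j : ℕ) + 1 < k' + 1 then 1 else (i0 : ℕ) - k' := by
      intro j
      by_cases hj : (j : ℕ) + 1 < k' + 1
      · rw [if_pos hj, gB_val_lt hkn i0 hj]
        omega
      · rw [if_neg hj]
        have hjl : j = Fin.last k' := Fin.ext (by have := j.isLt; simp [Fin.val_last]; omega)
        rw [hjl, gB_last hkn i0, Fin.val_last]
    rw [Finset.sum_congr rfl fun j _ => hterm j, Fin.sum_univ_castSucc]
    have h1 : ∀ j : Fin k', (if ((Fin.castSucc j : Fin (k' + 1)) : ℕ) + 1 < k' + 1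
        then 1 else (i0 : ℕ) - k') = 1 := fun j =>
      if_pos (by rw [Fin.coe_castSucc]; have := j.isLt; omega)
    rw [Finset.sum_congr rfl fun j _ => h1 j, Finset.sum_const,
      if_neg (by rw [Fin.val_last]; omega)]
    simp only [Finset.card_univ, Fintype.card_fin, smul_eq_mul, mul_one]
    omega
  rw [he]
  have hdet := coeff_one_det_single
    (M := fun i j => C (MB F (gB hkn i0 i) j) + X * C (Y (gB hkn i0 i) j))
    (i0 := Fin.last k') (w := fun j => Y i0 j) (fun j => by
      show C (MB F (gB hkn i0 (Fin.last k')) j) + X * C (Y (gB hkn i0 (Fin.last k')) j)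
        = X * C (Y i0 j)
      rw [gB_last hkn i0, MB_row_zero i0 (Or.inr hi0) j, map_zero, zero_add])
  rw [hdet]
  have hmat : (fun i j => if i = Fin.last k' then Y i0 j
        else ((fun i j => C (MB F (gB hkn i0 i) j) + X * C (Y (gB hkn i0 i) j)) i j).eval 0)
      = ((finRotate (k' + 1)).permMatrix F).updateRow (Fin.last k') (fun j => Y i0 j) := by
    ext i j
    rcases eq_or_ne i (Fin.last k') with rfl | hne
    · rw [if_pos rfl, Matrix.updateRow_self]
    · rw [if_neg hne, Matrix.updateRow_ne hne]
      show (C (MB F (gB hkn i0 i) j) + X * C (Y (gB hkn i0 i) j)).eval 0 = _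
      rw [eval_add, eval_mul, eval_C, eval_X, zero_mul, add_zero]
      have hiv : (i : ℕ) ≠ k' := fun h => hne (Fin.ext (by rw [h, Fin.val_last]))
      have hi' : (i : ℕ) + 1 < k' + 1 := by have := i.isLt; omega
      rw [MB_gB_offrow hkn i0 j hi', perm_rot_entry j hiv]
  rw [hmat, det_perm_updateRow, finRotate_last, sign_finRotate]
  have hz : (0 : Fin (k' + 1)) = (⟨0, by omega⟩ : Fin (k' + 1)) := Fin.ext (Fin.val_zero _)
  have hcast : ((((-1 : ℤˣ) ^ (k' + 1 - 1) : ℤˣ) : ℤ) : F) = (-1 : F) ^ (k' + 1 - 1) := by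
    push_cast
    norm_num
  rw [hz, hcast]
  have hk1 : k' + 1 - 1 = k' := by omega
  rw [hk1, pow_add]
  ring

lemma relB (hk : 2 ≤ k) (hkn : k ≤ n)
    (Y : Matrix (Fin n) (Fin k) F)
    (hF : (k : Cardinal) < Cardinal.mk F)
    (hY : ∀ (A : Matrix (Fin n) (Fin k) F) (l : F),
      cullisDet (A + l • Y) = cullisDet A) :
    Y ⟨0, by have := hk; omega⟩ ⟨0, by have := hk; omega⟩
      + ∑ i0 : Fin n, (if k ≤ (i0 : ℕ) then
          (-1 : F) ^ ((i0 : ℕ) + (k - 1)) * Y i0 ⟨0, by have := hk; omega⟩ else 0) = 0 := by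
  classical
  have hkk : 1 ≤ k - 1 := by omega
  have h0 : ∑ f : Fin k → Fin n, Gterm (MB F) Y f = 0 := by
    rw [← paux_coeff_one]
    exact paux_coeff_one_eq_zero Y hF hY _
  set T : Finset (Fin n) := Finset.univ.filter (fun i0 : Fin n => k ≤ (i0 : ℕ)) with hT
  set S : Finset (Fin k → Fin n) := insert (g0 hkn) (T.image (gB hkn)) with hS
  have hklast : k - 1 < k := by omega
  have hlastc : ¬ (((⟨k - 1, hklast⟩ : Fin k) : ℕ) + 1 < k) := by
    exact (show ¬ (k - 1 + 1 < k) by omega)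
  have hgBlast : ∀ i0 : Fin n, gB hkn i0 ⟨k - 1, hklast⟩ = i0 := fun i0 => by
    simp only [gB]; rw [dif_neg hlastc]
  have hvanish : ∀ f ∈ (Finset.univ : Finset (Fin k → Fin n)), f ∉ S →
      Gterm (MB F) Y f = 0 := by
    intro f _ hfS
    unfold Gterm
    split_ifs with hf
    swap
    · rfl
    rcases classB hk hkn hf with ⟨j1, j2, hne, o1, o2⟩ | h | ⟨i0, hi0, h⟩
    · have hz : (Matrix.det fun i j => C (MB F (f i) j) + X * C (Y (f i) j)).coeff 1 = 0 := by
        refine coeff_one_det_eq_zero hne (fun j => ?_) (fun j => ?_)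
        · rw [MB_row_zero _ o1, map_zero, zero_add, mul_coeff_zero, coeff_X_zero, zero_mul]
        · rw [MB_row_zero _ o2, map_zero, zero_add, mul_coeff_zero, coeff_X_zero, zero_mul]
      rw [hz, mul_zero]
    · exact absurd (by rw [h, hS]; exact Finset.mem_insert_self _ _) hfS
    · refine absurd ?_ hfS
      rw [h, hS]
      exact Finset.mem_insert_of_mem (Finset.mem_image.mpr ⟨i0, by simp [hT, hi0], rfl⟩)
  have hsum : ∑ f ∈ S, Gterm (MB F) Y f = 0 := by
    rw [Finset.sum_subset (Finset.subset_univ S) hvanish]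
    exact h0
  have hg0nm : g0 hkn ∉ T.image (gB hkn) := by
    rw [Finset.mem_image]
    rintro ⟨i0, hi0mem, heq⟩
    have h1 := congrFun heq ⟨k - 1, hklast⟩
    rw [hgBlast] at h1
    have h2 : (i0 : ℕ) = k - 1 := by rw [h1, g0_val]
    rw [hT] at hi0mem
    simp at hi0mem
    omega
  have hinj : ∀ x ∈ T, ∀ y ∈ T, gB hkn x = gB hkn y → x = y := by
    intro x _ y _ hxy
    have := congrFun hxy ⟨k - 1, hklast⟩
    rwa [hgBlast, hgBlast] at this
  rw [hS, Finset.sum_insert hg0nm, Finset.sum_image hinj] at hsum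
  rw [Gterm_MB_g0 hk hkn Y] at hsum
  rw [Finset.sum_congr rfl (fun i0 hi0 => Gterm_MB_gB hk hkn Y i0
    (by rw [hT] at hi0; exact (Finset.mem_filter.mp hi0).2))] at hsum
  rw [hT, Finset.sum_filter] at hsum
  exact hsum


lemma MB'_g0_offrow (hk : 2 ≤ k) (hkn : k ≤ n) {i : Fin k} (j : Fin k) (hne : (i : ℕ) ≠ 1) :
    MB' F (g0 hkn i) j
      = ((Equiv.swap (⟨0, by have := hk; omega⟩ : Fin k) ⟨1, by have := hk; omega⟩).permMatrix F) i j := by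
  rw [permMatrix_apply, MB'_apply]
  simp only [g0_val]
  by_cases hi0 : (i : ℕ) = 0
  · have hie : i = (⟨0, by omega⟩ : Fin k) := Fin.ext hi0
    rw [hie, Equiv.swap_apply_left]
    by_cases hj : (j : ℕ) = 1
    · exact (if_pos (show (((⟨0, by omega⟩ : Fin k) : ℕ) = 0 ∧ (j : ℕ) = 1) ∨
          (((⟨0, by omega⟩ : Fin k) : ℕ) = (j : ℕ) ∧ 2 ≤ (j : ℕ)) from Or.inl ⟨rfl, hj⟩)).trans
        (if_pos (Fin.ext hj.symm : (⟨1, by omega⟩ : Fin k) = j)).symm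
    · refine (if_neg ?_).trans (if_neg (fun hc : (⟨1, by omega⟩ : Fin k) = j =>
        hj (congrArg Fin.val hc).symm)).symm
      rintro (⟨c1, c2⟩ | ⟨c1, c2⟩)
      · exact hj c2
      · omega
  · have hi2 : 2 ≤ (i : ℕ) := by omega
    rw [Equiv.swap_apply_of_ne_of_ne (fun hc => hi0 (congrArg Fin.val hc))
      (fun hc => hne (congrArg Fin.val hc))]
    by_cases hij : (i : ℕ) = (j : ℕ)
    · exact (if_pos (show ((i : ℕ) = 0 ∧ (j : ℕ) = 1) ∨ ((i : ℕ) = (j : ℕ) ∧ 2 ≤ (j : ℕ))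
          from Or.inr ⟨hij, by omega⟩)).trans (if_pos (Fin.ext hij : i = j)).symm
    · refine (if_neg ?_).trans (if_neg (fun hc : i = j => hij (congrArg Fin.val hc))).symm
      rintro (⟨c1, c2⟩ | ⟨c1, c2⟩)
      · exact hi0 c1
      · exact hij c1

lemma MB'_gB'_offrow (hk : 2 ≤ k' + 1) (hkn : k' + 1 ≤ n) (i0 : Fin n) {i : Fin (k' + 1)}
    (j : Fin (k' + 1)) (hi : (i : ℕ) ≠ k') :
    MB' F (gB' hk hkn i0 i) j = if (j : ℕ) = (i : ℕ) + 1 then 1 else 0 := by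
  rw [MB'_apply]
  by_cases hi0' : (i : ℕ) = 0
  · rw [gB'_val_zero hk hkn i0 hi0']
    by_cases hj : (j : ℕ) = (i : ℕ) + 1
    · rw [if_pos (Or.inl ⟨rfl, by omega⟩), if_pos hj]
    · rw [if_neg, if_neg hj]
      rintro (⟨c1, c2⟩ | ⟨c1, c2⟩)
      · omega
      · omega
  · have hilt : (i : ℕ) + 1 < k' + 1 := by have := i.isLt; omega
    rw [gB'_val_lt hk hkn i0 hi0' hilt]
    by_cases hj : (j : ℕ) = (i : ℕ) + 1
    · rw [if_pos (Or.inr ⟨hj.symm, by omega⟩), if_pos hj]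
    · rw [if_neg, if_neg hj]
      rintro (⟨c1, c2⟩ | ⟨c1, c2⟩)
      · omega
      · exact hj c1.symm

lemma Gterm_MB'_g0 (hk : 2 ≤ k) (hkn : k ≤ n) (Y : Matrix (Fin n) (Fin k) F) :
    Gterm (MB' F) Y (g0 hkn) = -(Y ⟨1, by have := hk; omega⟩ ⟨0, by have := hk; omega⟩) := by
  unfold Gterm
  rw [if_pos (g0_strictMono hkn)]
  have he : (∑ j : Fin k, (((g0 hkn j) : ℕ) - (j : ℕ))) = 0 :=
    Finset.sum_eq_zero fun j _ => by rw [g0_val]; omega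
  rw [he, pow_zero, one_mul]
  have h1k : 1 < k := by omega
  have hdet := coeff_one_det_single
    (M := fun i j => C (MB' F (g0 hkn i) j) + X * C (Y (g0 hkn i) j))
    (i0 := ⟨1, h1k⟩) (w := fun j => Y (g0 hkn ⟨1, h1k⟩) j) (fun j => by
      show C (MB' F (g0 hkn ⟨1, h1k⟩) j) + X * C (Y (g0 hkn ⟨1, h1k⟩) j)
        = X * C (Y (g0 hkn ⟨1, h1k⟩) j)
      rw [MB'_row_zero (g0 hkn ⟨1, h1k⟩) (Or.inl rfl) j, map_zero, zero_add])
  rw [hdet]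
  have hmat : (fun i j => if i = (⟨1, h1k⟩ : Fin k) then Y (g0 hkn ⟨1, h1k⟩) j
        else ((fun i j => C (MB' F (g0 hkn i) j) + X * C (Y (g0 hkn i) j)) i j).eval 0)
      = ((Equiv.swap (⟨0, by omega⟩ : Fin k) ⟨1, by omega⟩).permMatrix F).updateRow ⟨1, h1k⟩
          (fun j => Y (g0 hkn ⟨1, h1k⟩) j) := by
    ext i j
    rcases eq_or_ne i (⟨1, h1k⟩ : Fin k) with rfl | hne
    · rw [if_pos rfl, Matrix.updateRow_self]
    · rw [if_neg hne, Matrix.updateRow_ne hne]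
      show (C (MB' F (g0 hkn i) j) + X * C (Y (g0 hkn i) j)).eval 0 = _
      rw [eval_add, eval_mul, eval_C, eval_X, zero_mul, add_zero]
      exact MB'_g0_offrow hk hkn j (fun h1 => hne (Fin.ext h1))
  rw [hmat, det_perm_updateRow, Equiv.swap_apply_right,
    Equiv.Perm.sign_swap (Fin.ne_of_val_ne (show (0 : ℕ) ≠ 1 by omega))]
  simp only [Units.val_neg, Units.val_one, Int.cast_neg, Int.cast_one, mul_neg, mul_one]
  rfl

lemma Gterm_MB'_gB' (hk : 2 ≤ k) (hkn : k ≤ n) (Y : Matrix (Fin n) (Fin k) F)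
    (i0 : Fin n) (hi0 : k ≤ (i0 : ℕ)) :
    Gterm (MB' F) Y (gB' hk hkn i0)
      = -((-1 : F) ^ ((i0 : ℕ) + (k - 1)) * Y i0 ⟨0, by have := hk; omega⟩) := by
  obtain ⟨k', rfl⟩ : ∃ k', k = k' + 1 := ⟨k - 1, by omega⟩
  unfold Gterm
  rw [if_pos (gB'_strictMono hk hkn i0 hi0)]
  have he : (∑ j : Fin (k' + 1), (((gB' hk hkn i0 j) : ℕ) - (j : ℕ))) = (i0 : ℕ) - 1 := by
    have hterm : ∀ j : Fin (k' + 1), ((gB' hk hkn i0 j : ℕ) - (j : ℕ))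
        = if (j : ℕ) = 0 then 0 else if (j : ℕ) + 1 < k' + 1 then 1 else (i0 : ℕ) - k' := by
      intro j
      by_cases hj0 : (j : ℕ) = 0
      · rw [if_pos hj0, gB'_val_zero hk hkn i0 hj0]
        omega
      · rw [if_neg hj0]
        by_cases hj : (j : ℕ) + 1 < k' + 1
        · rw [if_pos hj, gB'_val_lt hk hkn i0 hj0 hj]
          omega
        · rw [if_neg hj]
          have hjl : j = Fin.last k' := Fin.ext (by have := j.isLt; simp [Fin.val_last]; omega)
          rw [hjl, gB'_last hk hkn i0, Fin.val_last]
    obtain ⟨k'', rfl⟩ : ∃ k'', k' = k'' + 1 := ⟨k' - 1, by omega⟩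
    rw [Finset.sum_congr rfl fun j _ => hterm j, Fin.sum_univ_castSucc]
    rw [if_neg (by rw [Fin.val_last]; omega)]
    rw [if_neg (by rw [Fin.val_last]; omega)]
    rw [Fin.sum_univ_succ]
    rw [if_pos (by simp)]
    have h1 : ∀ j : Fin k'',
        (if ((Fin.castSucc (Fin.succ j) : Fin (k'' + 1 + 1)) : ℕ) = 0 then (0 : ℕ)
          else if ((Fin.castSucc (Fin.succ j) : Fin (k'' + 1 + 1)) : ℕ) + 1 < k'' + 1 + 1 then 1
          else (i0 : ℕ) - (k'' + 1)) = 1 := by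
      intro j
      rw [if_neg (by simp), if_pos (by simp only [Fin.coe_castSucc, Fin.val_succ]; have := j.isLt; omega)]
    rw [Finset.sum_congr rfl fun j _ => h1 j, Finset.sum_const]
    simp only [Finset.card_univ, Fintype.card_fin, smul_eq_mul, mul_one]
    omega
  rw [he]
  have hdet := coeff_one_det_single
    (M := fun i j => C (MB' F (gB' hk hkn i0 i) j) + X * C (Y (gB' hk hkn i0 i) j))
    (i0 := Fin.last k') (w := fun j => Y i0 j) (fun j => by
      show C (MB' F (gB' hk hkn i0 (Fin.last k')) j) + X * C (Y (gB' hk hkn i0 (Fin.last k')) j)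
        = X * C (Y i0 j)
      rw [gB'_last hk hkn i0, MB'_row_zero i0 (Or.inr hi0) j, map_zero, zero_add])
  rw [hdet]
  have hmat : (fun i j => if i = Fin.last k' then Y i0 j
        else ((fun i j => C (MB' F (gB' hk hkn i0 i) j) + X * C (Y (gB' hk hkn i0 i) j)) i j).eval 0)
      = ((finRotate (k' + 1)).permMatrix F).updateRow (Fin.last k') (fun j => Y i0 j) := by
    ext i j
    rcases eq_or_ne i (Fin.last k') with rfl | hne
    · rw [if_pos rfl, Matrix.updateRow_self]
    · rw [if_neg hne, Matrix.updateRow_ne hne]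
      show (C (MB' F (gB' hk hkn i0 i) j) + X * C (Y (gB' hk hkn i0 i) j)).eval 0 = _
      rw [eval_add, eval_mul, eval_C, eval_X, zero_mul, add_zero]
      have hiv : (i : ℕ) ≠ k' := fun h => hne (Fin.ext (by rw [h, Fin.val_last]))
      rw [MB'_gB'_offrow hk hkn i0 j hiv, perm_rot_entry j hiv]
  rw [hmat, det_perm_updateRow, finRotate_last, sign_finRotate]
  have hz : (0 : Fin (k' + 1)) = (⟨0, by omega⟩ : Fin (k' + 1)) := Fin.ext (Fin.val_zero _)
  have hcast : ((((-1 : ℤˣ) ^ (k' + 1 - 1) : ℤˣ) : ℤ) : F) = (-1 : F) ^ (k' + 1 - 1) := by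
    push_cast
    norm_num
  rw [hz, hcast]
  have hk1 : k' + 1 - 1 = k' := by omega
  have hpow : (-1 : F) ^ ((i0 : ℕ) + k') = -((-1 : F) ^ ((i0 : ℕ) - 1) * (-1 : F) ^ k') := by
    obtain ⟨m, hm⟩ : ∃ m, (i0 : ℕ) = m + 1 := ⟨(i0 : ℕ) - 1, by omega⟩
    rw [hm]
    have : m + 1 - 1 = m := by omega
    rw [this, pow_add, pow_succ]
    ring
  rw [hk1, hpow]
  ring

lemma relB' (hk : 2 ≤ k) (hkn : k ≤ n)
    (Y : Matrix (Fin n) (Fin k) F)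
    (hF : (k : Cardinal) < Cardinal.mk F)
    (hY : ∀ (A : Matrix (Fin n) (Fin k) F) (l : F),
      cullisDet (A + l • Y) = cullisDet A) :
    -(Y ⟨1, by have := hk; omega⟩ ⟨0, by have := hk; omega⟩)
      + ∑ i0 : Fin n, (if k ≤ (i0 : ℕ) then
          -((-1 : F) ^ ((i0 : ℕ) + (k - 1)) * Y i0 ⟨0, by have := hk; omega⟩) else 0) = 0 := by
  classical
  have h0 : ∑ f : Fin k → Fin n, Gterm (MB' F) Y f = 0 := by
    rw [← paux_coeff_one]
    exact paux_coeff_one_eq_zero Y hF hY _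
  set T : Finset (Fin n) := Finset.univ.filter (fun i0 : Fin n => k ≤ (i0 : ℕ)) with hT
  set S : Finset (Fin k → Fin n) := insert (g0 hkn) (T.image (gB' hk hkn)) with hS
  have hklast : k - 1 < k := by omega
  have hgBlast : ∀ i0 : Fin n, gB' hk hkn i0 ⟨k - 1, hklast⟩ = i0 := fun i0 => by
    simp only [gB']
    rw [if_neg (show ¬ (k - 1 = 0) by omega), dif_neg (show ¬ (k - 1 + 1 < k) by omega)]
  have hvanish : ∀ f ∈ (Finset.univ : Finset (Fin k → Fin n)), f ∉ S →
      Gterm (MB' F) Y f = 0 := by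
    intro f _ hfS
    unfold Gterm
    split_ifs with hf
    swap
    · rfl
    rcases classB' hk hkn hf with ⟨j1, j2, hne, o1, o2⟩ | h | ⟨i0, hi0, h⟩
    · have hz : (Matrix.det fun i j => C (MB' F (f i) j) + X * C (Y (f i) j)).coeff 1 = 0 := by
        refine coeff_one_det_eq_zero hne (fun j => ?_) (fun j => ?_)
        · rw [MB'_row_zero _ o1, map_zero, zero_add, mul_coeff_zero, coeff_X_zero, zero_mul]
        · rw [MB'_row_zero _ o2, map_zero, zero_add, mul_coeff_zero, coeff_X_zero, zero_mul]
      rw [hz, mul_zero]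
    · exact absurd (by rw [h, hS]; exact Finset.mem_insert_self _ _) hfS
    · refine absurd ?_ hfS
      rw [h, hS]
      exact Finset.mem_insert_of_mem (Finset.mem_image.mpr ⟨i0, by simp [hT, hi0], rfl⟩)
  have hsum : ∑ f ∈ S, Gterm (MB' F) Y f = 0 := by
    rw [Finset.sum_subset (Finset.subset_univ S) hvanish]
    exact h0
  have hg0nm : g0 hkn ∉ T.image (gB' hk hkn) := by
    rw [Finset.mem_image]
    rintro ⟨i0, hi0mem, heq⟩
    have h1 := congrFun heq ⟨k - 1, hklast⟩
    rw [hgBlast] at h1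
    have h2 : (i0 : ℕ) = k - 1 := by rw [h1, g0_val]
    rw [hT] at hi0mem
    simp at hi0mem
    omega
  have hinj : ∀ x ∈ T, ∀ y ∈ T, gB' hk hkn x = gB' hk hkn y → x = y := by
    intro x _ y _ hxy
    have := congrFun hxy ⟨k - 1, hklast⟩
    rwa [hgBlast, hgBlast] at this
  rw [hS, Finset.sum_insert hg0nm, Finset.sum_image hinj] at hsum
  rw [Gterm_MB'_g0 hk hkn Y] at hsum
  rw [Finset.sum_congr rfl (fun i0 hi0 => Gterm_MB'_gB' hk hkn Y i0
    (by rw [hT] at hi0; exact (Finset.mem_filter.mp hi0).2))] at hsum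
  rw [hT, Finset.sum_filter] at hsum
  exact hsum

end Blocks

end CullisAux

/-- Lemma 3.2: a matrix in the radical of the Cullis determinant has equal
`(1,1)` and `(2,1)` entries. -/
theorem stmt4 {F : Type*} [Field F] {n k : ℕ} (hk : 2 ≤ k) (hkn : k ≤ n)
    (hodd : Odd (n + k)) (hF : (k : Cardinal) < Cardinal.mk F)
    (Y : Matrix (Fin n) (Fin k) F)
    (hY : ∀ (A : Matrix (Fin n) (Fin k) F) (l : F),
      cullisDet (A + l • Y) = cullisDet A) :
    Y ⟨0, by omega⟩ ⟨0, by omega⟩ - Y ⟨1, by omega⟩ ⟨0, by omega⟩ = 0 := by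
  have h1 := CullisAux.relB hk hkn Y hF hY
  have h2 := CullisAux.relB' hk hkn Y hF hY
  have h3 : (∑ i0 : Fin n, (if k ≤ (i0 : ℕ) then
        -((-1 : F) ^ ((i0 : ℕ) + (k - 1)) * Y i0 ⟨0, by omega⟩) else 0))
      = -(∑ i0 : Fin n, (if k ≤ (i0 : ℕ) then
        ((-1 : F) ^ ((i0 : ℕ) + (k - 1)) * Y i0 ⟨0, by omega⟩) else 0)) := by
    rw [← Finset.sum_neg_distrib]
    refine Finset.sum_congr rfl fun i0 _ => ?_
    split_ifs <;> simp
  rw [h3] at h2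
  linear_combination h1 + h2
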